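/- arXiv:2205.08126 — 3 statements merged into one kernel-verified Lean document; each statement's English description precedes it below -/
import Mathlib

section
/- Let n ≥ 3. If the hypercube Q_n has a k-symmetric Hamilton cycle, then k is a power of 2 and k < 2n. -/
/-- The `n`-dimensional hypercube graph: vertices are bitstrings of length `n`,
two strings being adjacent iff they differ in exactly one bit. -/
def hypercube (n : ℕ) : SimpleGraph (Fin n → Bool) where
  Adj x y := hammingDist x y = 1
  symm := ⟨fun x y (h : hammingDist x y = 1) => by rwa [hammingDist_comm]⟩
  loopless := ⟨fun x (h : hammingDist x x = 1) => by simp [hammingDist_self] at h⟩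

/-- `x : ZMod N → V` is a Hamilton cycle of `G`: a cyclic listing of all vertices of `G`
in which consecutive vertices are adjacent. -/
def IsHamCycle {V : Type*} (G : SimpleGraph V) {N : ℕ} (x : ZMod N → V) : Prop :=
  Function.Bijective x ∧ ∀ i : ZMod N, G.Adj (x i) (x (i + 1))

/-- The Hamilton cycle `x` of `G` is `k`-symmetric: `k` divides `N` and the map
`x i ↦ x (i + N/k)` is an automorphism of `G`. -/
def IsSymmHamCycle {V : Type*} (G : SimpleGraph V) {N : ℕ} (x : ZMod N → V) (k : ℕ) : Prop :=
  IsHamCycle G x ∧ k ∣ N ∧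
    ∃ f : G ≃g G, ∀ i : ZMod N, f (x i) = x (i + ((N / k : ℕ) : ZMod N))

/-!
Graph automorphisms of `Q_n` preserve Hamming distance, hence are the maps `v ↦ v ∘ ρ + t` for a
permutation `ρ` of the coordinates and a translation `t` (vectors over the Boolean ring `Bool`).
The automorphism `f` of a `k`-symmetric Hamilton cycle shifts the cycle by `2^n / k`, so its order
is exactly `k`, a divisor of `2^n`. The `(orderOf ρ)`-th iterate of `f` is a translation, so
`k ∣ 2 · orderOf ρ`; as `orderOf ρ` is a power of `2`, it is the length of one cycle of `ρ`, whence
`k ≤ 2n`, and `k = 2n` forces `ρ` to be an `n`-cycle. In that case compare parities of weights: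
every edge of the cycle changes the parity, and `f` changes it by the parity of `t`, so `t` has the
parity of the (even) shift `2^n / 2n`. The `n`-th iterate of `f` is then the translation by the
vector all of whose coordinates are the parity of `t`, i.e. the identity, contradicting order `2n`.
-/

open Finset Function

section Hamming

variable {ι κ β γ : Type*} [Fintype ι] [DecidableEq ι] [DecidableEq β]

lemma hammingDist_update_self {u : ι → β} {j : ι} {b : β} (h : u j ≠ b) :
    hammingDist u (update u j b) = 1 := by
  refine card_eq_one.mpr ⟨j, ?_⟩
  ext i
  by_cases hij : i = j <;> simp [hij, h]

lemma hammingDist_update_add_one {u v : ι → β} {j : ι} (h : u j ≠ v j) :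
    hammingDist (update u j (v j)) v + 1 = hammingDist u v := by
  have hfilter : ({i | update u j (v j) i ≠ v i} : Finset ι) =
      ({i | u i ≠ v i} : Finset ι).erase j := by
    ext i
    by_cases hij : i = j <;> simp [hij]
  rw [hammingDist, hfilter, card_erase_add_one (by simpa using h), hammingDist]

lemma hammingDist_map_le_of_adj [Fintype κ] [DecidableEq γ] {φ : (ι → β) → κ → γ}
    (hφ : ∀ u v, hammingDist u v = 1 → hammingDist (φ u) (φ v) ≤ 1) (u v : ι → β) :
    hammingDist (φ u) (φ v) ≤ hammingDist u v := by
  induction h : hammingDist u v generalizing u with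
  | zero => simp [hammingDist_eq_zero.mp h]
  | succ m ih =>
    obtain ⟨j, hj⟩ : ∃ j, u j ≠ v j := by
      by_contra! huv
      simp [funext huv] at h
    calc hammingDist (φ u) (φ v)
        ≤ hammingDist (φ u) (φ (update u j (v j))) + hammingDist (φ (update u j (v j))) (φ v) :=
          hammingDist_triangle _ _ _
      _ ≤ 1 + m := add_le_add (hφ _ _ (hammingDist_update_self hj))
          (ih _ (by have := hammingDist_update_add_one hj; omega))
      _ = m + 1 := add_comm _ _

end Hamming

theorem hammingDist_map_hypercubeIso {n m : ℕ} (f : hypercube n ≃g hypercube m)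
    (u v : Fin n → Bool) : hammingDist (f u) (f v) = hammingDist u v :=
  le_antisymm
    (hammingDist_map_le_of_adj (φ := f) (fun a b hab => (f.map_adj_iff.mpr hab).le) u v) <| by
    simpa using hammingDist_map_le_of_adj (φ := f.symm)
      (fun a b hab => (f.symm.map_adj_iff.mpr hab).le) (f u) (f v)

namespace Equiv.Perm

variable {α : Type*} [Fintype α] [DecidableEq α] {σ : Perm α}

theorem orderOf_mem_cycleType_of_eq_prime_pow {p e : ℕ} (hp : p.Prime)
    (h : orderOf σ = p ^ (e + 1)) : orderOf σ ∈ σ.cycleType := by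
  by_contra hmem
  have hdvd : σ.cycleType.lcm ∣ p ^ e := Multiset.lcm_dvd.mpr fun b hb => by
    obtain ⟨c, hc, rfl⟩ := (Nat.dvd_prime_pow hp).mp (h ▸ dvd_of_mem_cycleType hb)
    have hce : c ≠ e + 1 := by
      rintro rfl
      exact hmem (h ▸ hb)
    exact pow_dvd_pow p (by omega)
  rw [lcm_cycleType, h, Nat.pow_dvd_pow_iff_le_right hp.one_lt] at hdvd
  omega

theorem cycleType_eq_singleton_of_card_mem (h : Fintype.card α ∈ σ.cycleType) :
    σ.cycleType = {Fintype.card α} :=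
  cycleType_of_card_le_mem_cycleType_add_two (by omega) h

theorem orderOf_eq_card_of_card_mem_cycleType (h : Fintype.card α ∈ σ.cycleType) :
    orderOf σ = Fintype.card α := by
  rw [← lcm_cycleType, cycleType_eq_singleton_of_card_mem h]
  simp

theorem sum_range_card_pow_apply {M : Type*} [AddCommMonoid M]
    (h : Fintype.card α ∈ σ.cycleType) (g : α → M) (x : α) :
    ∑ i ∈ range (Fintype.card α), g ((σ ^ i) x) = ∑ y, g y := by
  have hct := cycleType_eq_singleton_of_card_mem h
  have hcyc : σ.IsCycle := card_cycleType_eq_one.mp (by rw [hct]; rfl)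
  have hsupp : σ.support = univ := eq_univ_of_card _ (by rw [← sum_cycleType, hct]; simp)
  have hmoved : ∀ y, σ y ≠ y := fun y => mem_support.mp (hsupp ▸ mem_univ y)
  have hsurj : Surjective fun i : Fin (Fintype.card α) => (σ ^ (i : ℕ)) x := fun y => by
    obtain ⟨i, hi, hiy⟩ := (hcyc.sameCycle (hmoved x) (hmoved y)).exists_pow_eq'
    exact ⟨⟨i, orderOf_eq_card_of_card_mem_cycleType h ▸ hi⟩, hiy⟩
  rw [← Fin.sum_univ_eq_sum_range]
  exact Fintype.sum_bijective _ ((Fintype.bijective_iff_surjective_and_card _).mpr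
    ⟨hsurj, Fintype.card_fin _⟩) _ _ fun _ => rfl

end Equiv.Perm

theorem iterate_eq_id_iff_nsmul_eq_zero {G V : Type*} [AddGroup G] {x : G → V} (hx : Bijective x)
    {f : V → V} {d : G} (hf : ∀ i, f (x i) = x (i + d)) (j : ℕ) : f^[j] = id ↔ j • d = 0 := by
  have hiter : ∀ i, f^[j] (x i) = x (i + j • d) := by
    induction j with
    | zero => simp
    | succ j ih => intro i; rw [iterate_succ_apply', ih, hf, succ_nsmul, add_assoc]
  constructor
  · intro h
    simpa using hx.1 ((hiter 0).symm.trans (congrFun h (x 0)))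
  · intro h
    funext v
    obtain ⟨i, rfl⟩ := hx.2 v
    rw [hiter, h, add_zero, id]

theorem ZMod.nsmul_natCast_eq_zero_iff_dvd {k L N : ℕ} (hL : 0 < L) (h : k * L = N) (j : ℕ) :
    j • (L : ZMod N) = 0 ↔ k ∣ j := by
  rw [nsmul_eq_mul, ← Nat.cast_mul, ZMod.natCast_eq_zero_iff, ← h, Nat.mul_dvd_mul_iff_right hL]

theorem lt_of_two_pow_eq_two_mul {a n : ℕ} (hn : 3 ≤ n) (h : 2 ^ a = 2 * n) : a < n := by
  obtain _ | _ | _ | c := a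
  · omega
  · omega
  · omega
  have := @Nat.lt_two_pow_self (c + 1)
  rw [pow_succ, pow_succ] at h
  omega

namespace Hypercube

variable {ι : Type*}

def permAdd (ρ : Equiv.Perm ι) (t : ι → Bool) (v : ι → Bool) : ι → Bool := v ∘ ρ + t

@[simp]
lemma permAdd_apply (ρ : Equiv.Perm ι) (t v : ι → Bool) (j : ι) :
    permAdd ρ t v j = v (ρ j) + t j := rfl

theorem iterate_permAdd (ρ : Equiv.Perm ι) (t : ι → Bool) (m : ℕ) :
    (permAdd ρ t)^[m] = permAdd (ρ ^ m) (∑ i ∈ range m, t ∘ ⇑(ρ ^ i)) := by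
  induction m with
  | zero => funext v j; simp
  | succ m ih =>
    funext v j
    rw [iterate_succ_apply', ih]
    simp only [permAdd_apply, sum_range_succ', Pi.add_apply, Finset.sum_apply, pow_succ,
      Equiv.Perm.mul_apply, comp_apply, pow_zero, Equiv.Perm.one_apply, add_assoc]

theorem iterate_orderOf_mul_two_permAdd (ρ : Equiv.Perm ι) (t : ι → Bool) :
    (permAdd ρ t)^[orderOf ρ * 2] = id := by
  rw [iterate_mul, iterate_permAdd, pow_orderOf_eq_one]
  funext v j
  simp [add_assoc, BooleanRing.add_self]

section Coordinates

variable [DecidableEq ι] {ρ : Equiv.Perm ι} {t : ι → Bool}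

theorem permAdd_eq_id_iff : permAdd ρ t = id ↔ ρ = 1 ∧ t = 0 := by
  constructor
  · intro h
    have ht : t = 0 := by simpa [permAdd] using congrFun h 0
    refine ⟨Equiv.ext fun j => ?_, ht⟩
    have hj := congrFun (congrFun h (Pi.single (ρ j) true)) j
    simpa [ht, Pi.single_apply, eq_comm (a := j)] using hj.symm
  · rintro ⟨rfl, rfl⟩
    funext v j
    simp

variable [Fintype ι]

lemma hammingNorm_single_true (i : ι) : hammingNorm (Pi.single i true : ι → Bool) = 1 :=
  card_eq_one.mpr ⟨i, by ext; simp [Pi.single_apply, Bool.zero_eq_false]⟩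

lemma exists_eq_single_of_hammingNorm_eq_one {w : ι → Bool} (h : hammingNorm w = 1) :
    ∃ j, w = Pi.single j true := by
  obtain ⟨j, hj⟩ := card_eq_one.mp h
  refine ⟨j, funext fun i => ?_⟩
  have hi : w i = true ↔ i = j := by
    simpa [Bool.zero_eq_false] using congrArg (i ∈ ·) hj
  rw [Pi.single_apply]
  split_ifs with hij
  · exact hi.mpr hij
  · simpa [Bool.zero_eq_false] using mt hi.mp hij

lemma hammingDist_single_lt_iff (v : ι → Bool) (i : ι) :
    hammingDist v (Pi.single i true) < hammingDist v 0 ↔ v i = true := by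
  have hsplit : ∀ w : ι → Bool, (∀ j ≠ i, w j = false) → hammingDist v w =
      (if v i ≠ w i then 1 else 0) + ∑ j ∈ univ.erase i, if v j ≠ false then 1 else 0 := by
    intro w hw
    rw [hammingDist, card_filter, ← add_sum_erase _ _ (mem_univ i)]
    congr 1
    exact sum_congr rfl fun j hj => by rw [hw j (ne_of_mem_erase hj)]
  rw [hsplit _ fun j hj => by simp [hj, Bool.zero_eq_false], hsplit 0 fun _ _ => rfl]
  cases v i <;> simp

theorem exists_eq_permAdd_of_hammingDist_eq {F : (ι → Bool) → ι → Bool}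
    (hF : ∀ u v, hammingDist (F u) (F v) = hammingDist u v) :
    ∃ ρ t, F = permAdd ρ t := by
  set G := fun v => F v - F 0
  have hGd : ∀ u v, hammingDist (G u) (G v) = hammingDist u v := fun u v =>
    (hammingDist_comp (fun i b => b - F 0 i) fun _ => sub_left_injective).trans (hF u v)
  have hG0 : G 0 = 0 := sub_self _
  have hsingle : ∀ i, ∃ j, G (Pi.single i true) = Pi.single j true := fun i =>
    exists_eq_single_of_hammingNorm_eq_one <| by
      rw [← hammingDist_zero_right, ← hG0, hGd, hammingDist_zero_right, hammingNorm_single_true]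
  choose σ hσ using hsingle
  -- `v i = true` iff `v` is closer to `Pi.single i true` than to `0`, a property `G` transports.
  have hkey : ∀ v i, G v (σ i) = v i := fun v i => by
    rw [Bool.eq_iff_iff, ← hammingDist_single_lt_iff, ← hammingDist_single_lt_iff, ← hσ, ← hG0,
      hGd, hGd, hG0]
  have hσ_inj : Injective σ := fun i i' h => by
    have := hkey (Pi.single i true) i'
    rw [← h, hkey] at this
    exact (by simpa [Pi.single_apply] using this : i' = i).symm
  let π := Equiv.ofBijective σ (Finite.injective_iff_bijective.mp hσ_inj)
  refine ⟨π.symm, F 0, funext fun v => funext fun j => ?_⟩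
  have hj := hkey v (π.symm j)
  rw [show σ (π.symm j) = j from π.apply_symm_apply j] at hj
  rw [permAdd_apply, ← hj]
  exact (sub_add_cancel _ _).symm

end Coordinates

section Parity

variable [Fintype ι]

def parity (v : ι → Bool) : Bool := ∑ i, v i

theorem natCast_hammingDist (u v : ι → Bool) :
    (hammingDist u v : Bool) = parity u + parity v := by
  rw [hammingDist, natCast_card_filter, parity, parity, ← sum_add_distrib]
  refine sum_congr rfl fun i _ => ?_
  cases u i <;> cases v i <;> rfl

theorem parity_permAdd (ρ : Equiv.Perm ι) (t v : ι → Bool) :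
    parity (permAdd ρ t v) = parity v + parity t := by
  simp only [parity, permAdd_apply, sum_add_distrib, Equiv.sum_comp ρ v]

theorem parity_add_natCast {G : Type*} [AddMonoidWithOne G] {x : G → ι → Bool}
    (hx : ∀ i, hammingDist (x i) (x (i + 1)) = 1) (i : G) (m : ℕ) :
    parity (x (i + m)) = parity (x i) + m := by
  induction m with
  | zero => simp
  | succ m ih =>
    have hstep := natCast_hammingDist (x (i + m)) (x (i + m + 1))
    rw [hx, Nat.cast_one] at hstep
    rw [Nat.cast_succ, ← add_assoc, Nat.cast_succ, ← add_assoc, ← ih, hstep, ← add_assoc,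
      BooleanRing.add_self, zero_add]

end Parity

variable [Fintype ι] [DecidableEq ι] {ρ : Equiv.Perm ι} {t : ι → Bool}

theorem two_pow_eq_two_mul_card_of_le {a : ℕ} (hι : 2 ≤ Fintype.card ι)
    (hA : ∀ j, (permAdd ρ t)^[j] = id ↔ 2 ^ a ∣ j) (hle : 2 * Fintype.card ι ≤ 2 ^ a) :
    2 ^ a = 2 * Fintype.card ι ∧ Fintype.card ι ∈ ρ.cycleType := by
  have hρ : ρ ^ 2 ^ a = 1 := by
    have := (hA _).mpr dvd_rfl
    rw [iterate_permAdd] at this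
    exact (permAdd_eq_id_iff.mp this).1
  obtain ⟨e, -, he⟩ := (Nat.dvd_prime_pow Nat.prime_two).mp (orderOf_dvd_of_pow_eq_one hρ)
  have hdvd : 2 ^ a ∣ orderOf ρ * 2 := (hA _).mp (iterate_orderOf_mul_two_permAdd ρ t)
  have hle' := Nat.le_of_dvd (Nat.mul_pos (orderOf_pos ρ) two_pos) hdvd
  obtain _ | e := e
  · omega
  have hmem := Equiv.Perm.orderOf_mem_cycleType_of_eq_prime_pow Nat.prime_two he
  have hord : orderOf ρ ≤ Fintype.card ι :=
    (Equiv.Perm.le_card_support_of_mem_cycleType hmem).trans (card_le_univ _)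
  have hcard : orderOf ρ = Fintype.card ι := by omega
  exact ⟨by omega, hcard ▸ hmem⟩

theorem iterate_card_permAdd_eq_id (h : Fintype.card ι ∈ ρ.cycleType) (ht : parity t = 0) :
    (permAdd ρ t)^[Fintype.card ι] = id := by
  rw [iterate_permAdd, permAdd_eq_id_iff, ← Equiv.Perm.orderOf_eq_card_of_card_mem_cycleType h,
    pow_orderOf_eq_one]
  refine ⟨rfl, funext fun j => ?_⟩
  rw [Finset.sum_apply, Pi.zero_apply, Equiv.Perm.orderOf_eq_card_of_card_mem_cycleType h]
  exact (Equiv.Perm.sum_range_card_pow_apply h t j).trans ht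

end Hypercube

open Hypercube in
theorem stmt1 (n k : ℕ) (hn : 3 ≤ n) (x : ZMod (2 ^ n) → (Fin n → Bool))
    (h : IsSymmHamCycle (hypercube n) x k) :
    (∃ i : ℕ, k = 2 ^ i) ∧ k < 2 * n := by
  obtain ⟨⟨hx, hadj⟩, hk, f, hf⟩ := h
  obtain ⟨a, -, rfl⟩ := (Nat.dvd_prime_pow Nat.prime_two).mp hk
  refine ⟨⟨a, rfl⟩, ?_⟩
  obtain ⟨ρ, t, hρt⟩ := exists_eq_permAdd_of_hammingDist_eq (hammingDist_map_hypercubeIso f)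
  rw [hρt] at hf
  set L := 2 ^ n / 2 ^ a
  have hL : 2 ^ a * L = 2 ^ n := Nat.mul_div_cancel' hk
  have hA : ∀ j, (permAdd ρ t)^[j] = id ↔ 2 ^ a ∣ j := fun j =>
    (iterate_eq_id_iff_nsmul_eq_zero hx hf j).trans
      (ZMod.nsmul_natCast_eq_zero_iff_dvd (Nat.div_pos (Nat.le_of_dvd (by positivity) hk)
        (by positivity)) hL j)
  have htL : parity t = L := by
    have hshift := parity_add_natCast hadj 0 L
    rw [← hf, parity_permAdd] at hshift
    exact add_left_cancel hshift
  by_contra! hlt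
  obtain ⟨hka, hmem⟩ :=
    two_pow_eq_two_mul_card_of_le (by rw [Fintype.card_fin]; omega) hA (by simpa using hlt)
  rw [Fintype.card_fin] at hka
  have hL_even : (L : Bool) = 0 := by
    obtain ⟨r, hr⟩ : 2 ∣ L := Nat.dvd_div_of_mul_dvd <| by
      rw [← pow_succ]
      exact pow_dvd_pow 2 (lt_of_two_pow_eq_two_mul hn hka)
    rw [hr, Nat.cast_mul, show ((2 : ℕ) : Bool) = 0 from rfl, zero_mul]
  have hdvd := (hA n).mp (by simpa using iterate_card_permAdd_eq_id hmem (htL.trans hL_even))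
  have := Nat.le_of_dvd (by omega) hdvd
  omega
end

section
/- Let g be an automorphism of a graph G all of whose orbits have the same size k ≥ 2, let R be a set containing exactly one vertex from each orbit of g, and let P be a path in G whose vertex set is exactly R and which starts at a vertex u that is adjacent to g(u) in G. Let H be a graph with an even number of vertices, let h be an automorphism of H whose order divides k, and let Q be a Hamilton path of H from some vertex v to h(v). Then the Cartesian product G □ H has a k-symmetric Hamilton cycle. -/
open Function Set

theorem Nat.exists_eq_mul_add {m : ℕ} (hm : 0 < m) (i : ℕ) : ∃ q r, r < m ∧ i = m * q + r :=
  ⟨i / m, i % m, Nat.mod_lt _ hm, (Nat.div_add_mod i m).symm⟩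

namespace SimpleGraph.Iso

variable {V W : Type*} {G : SimpleGraph V} {H : SimpleGraph W}

theorem adj_iterate (f : G ≃g G) (t : ℕ) {a b : V} (hab : G.Adj a b) :
    G.Adj (f^[t] a) (f^[t] b) := by
  induction t with
  | zero => exact hab
  | succ t ih => simpa only [iterate_succ_apply'] using f.map_adj_iff.2 ih

variable {V' W' : Type*} {G' : SimpleGraph V'} {H' : SimpleGraph W'}

def boxProd (g : G ≃g G') (h : H ≃g H') : G.boxProd H ≃g G'.boxProd H' where
  toEquiv := g.toEquiv.prodCongr h.toEquiv
  map_rel_iff' := by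
    rintro ⟨a₁, b₁⟩ ⟨a₂, b₂⟩
    simp [boxProd_adj, g.map_adj_iff, h.map_adj_iff, g.injective.eq_iff, h.injective.eq_iff]

@[simp]
theorem coe_boxProd (g : G ≃g G') (h : H ≃g H') : ⇑(g.boxProd h) = Prod.map g h := rfl

end SimpleGraph.Iso

theorem Function.Periodic.apply_val_add_natCast {α : Type*} {N : ℕ} [NeZero N] {y : ℕ → α}
    (hy : Periodic y N) (i : ZMod N) (c : ℕ) : y (i + c).val = y (i.val + c) := by
  rw [ZMod.val_add, ZMod.val_natCast, Nat.add_mod_mod, hy.map_mod_nat]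

theorem isHamCycle_of_periodic {X : Type*} [Fintype X] {Γ : SimpleGraph X} {N : ℕ} [NeZero N]
    {y : ℕ → X} (hy : Periodic y N) (hadj : ∀ i, Γ.Adj (y i) (y (i + 1))) (hinj : InjOn y (Iio N))
    (hcard : Fintype.card X = N) :
    IsHamCycle Γ (fun i : ZMod N => y i.val) := by
  refine ⟨(Fintype.bijective_iff_injective_and_card _).2 ⟨?_, by rw [ZMod.card, hcard]⟩,
    fun i => ?_⟩
  · exact fun i j hij => ZMod.val_injective N (hinj (ZMod.val_lt i) (ZMod.val_lt j) hij)
  · have := hy.apply_val_add_natCast i 1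
    rw [Nat.cast_one] at this
    simpa only [this] using hadj i.val

def orbitSeq {X : Type*} (f : X → X) (z : ℕ → X) (L i : ℕ) : X :=
  f^[i / L] (z (i % L))

namespace orbitSeq

variable {X : Type*} {f : X → X} {z : ℕ → X} {L : ℕ}

theorem mul_add (hL : 0 < L) (q : ℕ) {r : ℕ} (hr : r < L) :
    orbitSeq f z L (L * q + r) = f^[q] (z r) := by
  rw [orbitSeq, Nat.mul_add_div hL, Nat.div_eq_of_lt hr, Nat.mul_add_mod, Nat.mod_eq_of_lt hr,
    add_zero]

theorem add_right (hL : 0 < L) (i : ℕ) : orbitSeq f z L (i + L) = f (orbitSeq f z L i) := by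
  obtain ⟨q, r, hr, rfl⟩ := Nat.exists_eq_mul_add hL i
  rw [show L * q + r + L = L * (q + 1) + r by ring, mul_add hL _ hr, mul_add hL _ hr,
    iterate_succ_apply']

theorem periodic (hL : 0 < L) {k : ℕ} (hfk : ∀ x, f^[k] x = x) :
    Periodic (orbitSeq f z L) (k * L) := by
  intro i
  obtain ⟨q, r, hr, rfl⟩ := Nat.exists_eq_mul_add hL i
  rw [show L * q + r + k * L = L * (q + k) + r by ring, mul_add hL _ hr, mul_add hL _ hr,
    iterate_add_apply, hfk]

theorem adj {Γ : SimpleGraph X} (f : Γ ≃g Γ) (hL : 0 < L)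
    (hz : ∀ r, r + 1 < L → Γ.Adj (z r) (z (r + 1))) (hzf : Γ.Adj (z (L - 1)) (f (z 0)))
    (i : ℕ) : Γ.Adj (orbitSeq f z L i) (orbitSeq f z L (i + 1)) := by
  obtain ⟨q, r, hr, rfl⟩ := Nat.exists_eq_mul_add hL i
  rw [mul_add hL _ hr]
  by_cases hr1 : r + 1 < L
  · rw [add_assoc, mul_add hL _ hr1]
    exact f.adj_iterate q (hz r hr1)
  · rw [show L * q + r + 1 = L * (q + 1) + 0 by rw [Nat.mul_succ]; omega, mul_add hL _ hL,
      iterate_succ_apply, show r = L - 1 by omega]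
    exact f.adj_iterate q hzf

theorem injOn {k : ℕ} (hL : 0 < L)
    (hinj : InjOn (fun p : ℕ × ℕ => f^[p.1] (z p.2)) (Iio k ×ˢ Iio L)) :
    InjOn (orbitSeq f z L) (Iio (k * L)) := by
  intro i hi j hj hij
  have hdiv : ∀ i ∈ Iio (k * L), (i / L, i % L) ∈ Iio k ×ˢ Iio L := fun i hi =>
    ⟨(Nat.div_lt_iff_lt_mul hL).2 hi, Nat.mod_lt _ hL⟩
  have := hinj (hdiv i hi) (hdiv j hj) hij
  simp only [Prod.mk.injEq] at this
  rw [← Nat.div_add_mod i L, ← Nat.div_add_mod j L, this.1, this.2]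

end orbitSeq

theorem exists_isSymmHamCycle_of_injOn_iterate {X : Type*} [Fintype X] {Γ : SimpleGraph X}
    (f : Γ ≃g Γ) {k L : ℕ} (hk : 0 < k) (hL : 0 < L) (hfk : ∀ x, f^[k] x = x) {z : ℕ → X}
    (hz : ∀ r, r + 1 < L → Γ.Adj (z r) (z (r + 1))) (hzf : Γ.Adj (z (L - 1)) (f (z 0)))
    (hinj : InjOn (fun p : ℕ × ℕ => f^[p.1] (z p.2)) (Iio k ×ˢ Iio L))
    (hcard : Fintype.card X = k * L) :
    ∃ x : ZMod (Fintype.card X) → X, IsSymmHamCycle Γ x k := by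
  rw [hcard]
  have : NeZero (k * L) := ⟨by positivity⟩
  have hper := orbitSeq.periodic (z := z) hL hfk
  refine ⟨_, isHamCycle_of_periodic hper (orbitSeq.adj f hL hz hzf) (orbitSeq.injOn hL hinj)
    hcard, dvd_mul_right k L, f, fun i => ?_⟩
  rw [Nat.mul_div_cancel_left L hk, hper.apply_val_add_natCast, orbitSeq.add_right hL]

def IsOrbitTransversal {V : Type*} (g : V → V) (R : Set V) : Prop :=
  ∀ v, ∃! r, r ∈ R ∧ ∃ i, g^[i] r = v

namespace IsOrbitTransversal

variable {V : Type*} {g : V → V} {k : ℕ} {R : Set V}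

theorem injOn_iterate (horb : ∀ v, minimalPeriod g v = k) (hR : IsOrbitTransversal g R) :
    InjOn (fun p : ℕ × V => g^[p.1] p.2) (Iio k ×ˢ R) := by
  rintro ⟨t, r⟩ ⟨ht, hr⟩ ⟨t', r'⟩ ⟨ht', hr'⟩ (heq : g^[t] r = g^[t'] r')
  obtain rfl : r = r' := (hR _).unique ⟨hr, t, rfl⟩ ⟨hr', t', heq.symm⟩
  have hper := horb r
  exact Prod.ext (iterate_injOn_Iio_minimalPeriod (hper ▸ ht) (hper ▸ ht') heq) rfl

theorem injOn_iterate_of_bijOn (horb : ∀ v, minimalPeriod g v = k)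
    (hR : IsOrbitTransversal g R) {a : ℕ → V} {m : ℕ} (ha : BijOn a (Iio m) R) :
    InjOn (fun p : ℕ × ℕ => g^[p.1] (a p.2)) (Iio k ×ˢ Iio m) := by
  rintro ⟨t, s⟩ ⟨ht, hs⟩ ⟨t', s'⟩ ⟨ht', hs'⟩ heq
  have := hR.injOn_iterate horb (mk_mem_prod ht (ha.mapsTo hs)) (mk_mem_prod ht' (ha.mapsTo hs'))
    heq
  simp only [Prod.mk.injEq] at this ⊢
  exact ⟨this.1, ha.injOn hs hs' this.2⟩

theorem card_eq_mul [Fintype V] (hk : 0 < k) (horb : ∀ v, minimalPeriod g v = k)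
    (hR : IsOrbitTransversal g R) {a : ℕ → V} {m : ℕ} (ha : BijOn a (Iio m) R) :
    Fintype.card V = k * m := by
  have hbij : Bijective (fun p : Fin k × Fin m => g^[p.1] (a p.2)) := by
    refine ⟨fun p p' hpp' => ?_, fun v => ?_⟩
    · have := hR.injOn_iterate_of_bijOn horb ha (mk_mem_prod p.1.2 p.2.2)
        (mk_mem_prod p'.1.2 p'.2.2) hpp'
      simp only [Prod.mk.injEq] at this
      exact Prod.ext (Fin.ext this.1) (Fin.ext this.2)
    · obtain ⟨r, ⟨hr, i, rfl⟩, -⟩ := hR v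
      obtain ⟨s, hs, rfl⟩ := ha.surjOn hr
      exact ⟨(⟨i % k, Nat.mod_lt _ hk⟩, ⟨s, hs⟩), by
        simp only [← horb (a s), iterate_mod_minimalPeriod_eq]⟩
  simpa using (Fintype.card_of_bijective hbij).symm

end IsOrbitTransversal

theorem SimpleGraph.Walk.IsPath.bijOn_getVert {V : Type*} {G : SimpleGraph V} {u w : V}
    {p : G.Walk u w} (hp : p.IsPath) :
    BijOn p.getVert (Iio (p.length + 1)) {v | v ∈ p.support} := by
  refine ⟨fun i _ => p.getVert_mem_support i, fun i hi j hj hij =>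
    hp.getVert_injOn (Nat.lt_succ_iff.1 hi) (Nat.lt_succ_iff.1 hj) hij, fun v hv => ?_⟩
  obtain ⟨i, rfl, hi⟩ := Walk.mem_support_iff_exists_getVert.1 hv
  exact ⟨i, Nat.lt_succ_iff.2 hi, rfl⟩

def boustrophedon {V W : Type*} (a : ℕ → V) (b : ℕ → W) (m r : ℕ) : V × W :=
  (a (if Even (r / m) then r % m else m - 1 - r % m), b (r / m))

namespace boustrophedon

variable {V W : Type*} {a : ℕ → V} {b : ℕ → W} {m : ℕ}

theorem mul_add (hm : 0 < m) (j : ℕ) {s : ℕ} (hs : s < m) :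
    boustrophedon a b m (m * j + s) = (a (if Even j then s else m - 1 - s), b j) := by
  simp only [boustrophedon, Nat.mul_add_div hm, Nat.div_eq_of_lt hs, Nat.mul_add_mod,
    Nat.mod_eq_of_lt hs, add_zero]

theorem zero : boustrophedon a b m 0 = (a 0, b 0) := by
  simp [boustrophedon]

theorem mul_sub_one (hm : 0 < m) {n : ℕ} (hn : Even n) (hn0 : 0 < n) :
    boustrophedon a b m (m * n - 1) = (a 0, b (n - 1)) := by
  obtain ⟨n, rfl⟩ := Nat.exists_eq_add_of_lt hn0
  have hodd : ¬ Even n := by simpa [Nat.even_add_one] using hn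
  rw [show m * (0 + n + 1) - 1 = m * n + (m - 1) by rw [zero_add, Nat.mul_succ]; omega,
    mul_add hm _ (by omega), if_neg hodd, Nat.sub_self, show 0 + n + 1 - 1 = n by omega]

theorem boxProd_adj {G : SimpleGraph V} {H : SimpleGraph W} {n : ℕ}
    (ha : ∀ s, s + 1 < m → G.Adj (a s) (a (s + 1)))
    (hb : ∀ j, j + 1 < n → H.Adj (b j) (b (j + 1))) {r : ℕ} (hr : r + 1 < m * n) :
    (G.boxProd H).Adj (boustrophedon a b m r) (boustrophedon a b m (r + 1)) := by
  have hm : 0 < m := Nat.pos_of_ne_zero (by rintro rfl; simp at hr)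
  obtain ⟨j, s, hs, rfl⟩ := Nat.exists_eq_mul_add hm r
  rw [mul_add hm j hs]
  by_cases hs1 : s + 1 < m
  · rw [add_assoc, mul_add hm j hs1, SimpleGraph.boxProd_adj]
    refine Or.inl ⟨?_, rfl⟩
    split_ifs
    · exact ha s hs1
    · rw [show m - 1 - s = m - 1 - (s + 1) + 1 by omega]
      exact (ha _ (by omega)).symm
  · have hmj : m * (j + 1) ≤ m * j + s + 1 := by rw [Nat.mul_succ]; omega
    have hj : j + 1 < n := Nat.lt_of_mul_lt_mul_left (hmj.trans_lt hr)
    rw [show m * j + s + 1 = m * (j + 1) + 0 by rw [Nat.mul_succ]; omega, mul_add hm _ hm,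
      SimpleGraph.boxProd_adj]
    refine Or.inr ⟨hb j hj, ?_⟩
    simp only [Nat.even_add_one]
    congr 1
    split_ifs <;> omega

theorem injOn_iterate_prodMap {g : V → V} {h : W → W} {k n : ℕ}
    (hga : InjOn (fun p : ℕ × ℕ => g^[p.1] (a p.2)) (Iio k ×ˢ Iio m))
    (hh : Injective h) (hb : InjOn b (Iio n)) :
    InjOn (fun p : ℕ × ℕ => (Prod.map g h)^[p.1] (boustrophedon a b m p.2))
      (Iio k ×ˢ Iio (m * n)) := by
  rintro ⟨t, r⟩ ⟨ht, hr⟩ ⟨t', r'⟩ ⟨ht', hr'⟩ heq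
  have hm : 0 < m := Nat.pos_of_ne_zero (by rintro rfl; simp at hr)
  obtain ⟨j, s, hs, rfl⟩ := Nat.exists_eq_mul_add hm r
  obtain ⟨j', s', hs', rfl⟩ := Nat.exists_eq_mul_add hm r'
  simp only [Prod.map_iterate, mul_add hm _ hs, mul_add hm _ hs', Prod.map, Prod.mk.injEq] at heq
  have hidx : ∀ (j s : ℕ), s < m → (if Even j then s else m - 1 - s) < m := by
    intro j s hs
    split_ifs <;> omega
  obtain ⟨rfl, hss⟩ := Prod.mk.inj (hga (mk_mem_prod ht (hidx j s hs))
    (mk_mem_prod ht' (hidx j' s' hs')) heq.1)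
  have hj : j < n := Nat.lt_of_mul_lt_mul_left (a := m) (by rw [mem_Iio] at hr; omega)
  have hj' : j' < n := Nat.lt_of_mul_lt_mul_left (a := m) (by rw [mem_Iio] at hr'; omega)
  obtain rfl : j = j' := hb hj hj' (hh.iterate t heq.2)
  simp only [Prod.mk.injEq, true_and] at hss ⊢
  split_ifs at hss <;> omega

end boustrophedon

/-- Lemma about lifting a path on orbit representatives to a `k`-symmetric Hamilton cycle
in a Cartesian (box) product. -/
theorem stmt2 {V W : Type*} [Fintype V] [Fintype W] [DecidableEq W]
    (G : SimpleGraph V) (H : SimpleGraph W) (k : ℕ) (hk : 2 ≤ k)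
    -- `g` is an automorphism of `G` all of whose orbits have the same size `k`:
    (g : G ≃g G) (horb : ∀ v : V, Function.minimalPeriod (⇑g) v = k)
    -- `R` contains exactly one vertex from each orbit of `g`:
    (R : Set V) (hR : ∀ v : V, ∃! r : V, r ∈ R ∧ ∃ i : ℕ, (⇑g)^[i] r = v)
    -- `P` is a path in `G` whose vertex set is exactly `R`, starting at a vertex `u`
    -- adjacent to `g u`:
    (u w : V) (P : G.Walk u w) (hP : P.IsPath)
    (hsupp : {v : V | v ∈ P.support} = R)
    (hadj : G.Adj u (g u))
    -- `H` has an even number of vertices: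
    (heven : Even (Fintype.card W))
    -- `h` is an automorphism of `H` whose order divides `k`:
    (h : H ≃g H) (hord : ∀ b : W, (⇑h)^[k] b = b)
    -- `Q` is a Hamilton path of `H` from some vertex `v` to `h v`:
    (v : W) (Q : H.Walk v (h v)) (hQ : Q.IsHamiltonian) :
    ∃ x : ZMod (Fintype.card (V × W)) → V × W,
      IsSymmHamCycle (G.boxProd H) x k := by
  have hPR : BijOn P.getVert (Iio (P.length + 1)) R := hsupp ▸ hP.bijOn_getVert
  have hW : Fintype.card W = Q.length + 1 := by
    have := Fintype.card_pos_iff.2 ⟨v⟩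
    rw [hQ.length_eq]; omega
  have hgk : ∀ a, g^[k] a = a := fun a => horb a ▸ iterate_minimalPeriod
  refine exists_isSymmHamCycle_of_injOn_iterate (g.boxProd h) (by omega) (by positivity)
    (z := boustrophedon P.getVert Q.getVert (P.length + 1)) (fun x => ?_)
    (fun r hr => boustrophedon.boxProd_adj (a := P.getVert) (b := Q.getVert)
      (fun s hs => P.adj_getVert_succ (by omega)) (fun j hj => Q.adj_getVert_succ (by omega)) hr)
    ?_ (boustrophedon.injOn_iterate_prodMap
      (IsOrbitTransversal.injOn_iterate_of_bijOn horb hR hPR) h.injective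
      hQ.isPath.bijOn_getVert.injOn) ?_
  · simp only [SimpleGraph.Iso.coe_boxProd, Prod.map_iterate]
    exact Prod.ext (hgk x.1) (hord x.2)
  · rw [boustrophedon.mul_sub_one (by omega) (hW ▸ heven) (by omega), boustrophedon.zero]
    simpa [SimpleGraph.boxProd_adj] using hadj
  · rw [Fintype.card_prod, IsOrbitTransversal.card_eq_mul (by omega) horb hR hPR, hW, mul_assoc]
end

section
/- Let G be a finite group, S ⊆ G a generating set closed under inverses with e ∉ S, let g ∈ G and s ∈ S. If there exists a path in the Cayley graph Γ(G,S) from the identity e to g·s that intersects every right coset of the cyclic subgroup ⟨g⟩ exactly once, then the Hamilton compression satisfies κ(Γ(G,S)) ≥ ord(g), where ord(g) is the order of g in G. -/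
noncomputable def hamCompression {V : Type*} (G : SimpleGraph V) : ℕ :=
  sSup {k | ∃ (N : ℕ) (x : ZMod N → V), IsSymmHamCycle G x k}

/-- The Cayley graph of a group `G` with connection set `S` (closed under inverses and not
containing the identity): `x` and `y` are adjacent iff `y = x * s` for some `s ∈ S`. -/
def cayley {G : Type*} [Group G] (S : Set G) (hS : ∀ s ∈ S, s⁻¹ ∈ S)
    (h1 : (1 : G) ∉ S) : SimpleGraph G where
  Adj x y := x⁻¹ * y ∈ S
  symm := by
    constructor
    intro x y hxy
    have := hS _ hxy
    rwa [mul_inv_rev, inv_inv] at this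
  loopless := by
    constructor
    intro x hx
    exact h1 (by simpa using hx)

/-!
Write the path as `y₀ = 1, …, y_L = g * s`, put `n = L + 1` and `m = orderOf g`. The translates
`y, g • y, …, g^(m-1) • y` concatenate to a closed walk, since `g^q * y_L = g^(q+1) * s` is adjacent
to `g^(q+1) * y₀`. It visits every vertex exactly once because the `y_r` represent the right
cosets of `⟨g⟩` (each exactly once). Left multiplication by `g` is an automorphism of the Cayley
graph shifting this Hamilton cycle by `n = N / m` positions, so the cycle is `m`-symmetric.
-/

section HamCompression
variable {V : Type*} {G : SimpleGraph V} {N k : ℕ} {x : ZMod N → V}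

lemma IsHamCycle.natCard_eq (h : IsHamCycle G x) : Nat.card V = N := by
  rw [← Nat.card_eq_of_bijective x h.1, Nat.card_zmod]

lemma IsSymmHamCycle.le_natCard [Finite V] (h : IsSymmHamCycle G x k) : k ≤ Nat.card V := by
  have : Nonempty V := ⟨x 0⟩
  exact Nat.le_of_dvd Nat.card_pos (h.1.natCard_eq ▸ h.2.1)

lemma IsSymmHamCycle.le_hamCompression [Finite V] (h : IsSymmHamCycle G x k) :
    k ≤ hamCompression G :=
  le_csSup ⟨Nat.card V, fun _ ⟨_, _, hk⟩ => hk.le_natCard⟩ ⟨_, _, h⟩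

end HamCompression

lemma Function.Periodic.map_zmod_val_add_natCast {α : Type*} {f : ℕ → α} {N : ℕ} [NeZero N]
    (hf : Function.Periodic f N) (i : ZMod N) (c : ℕ) :
    f (i + c : ZMod N).val = f (i.val + c) := by
  rw [ZMod.val_add, ZMod.val_natCast, hf.map_mod_nat, ← hf.map_mod_nat (i.val + c % N),
    Nat.add_mod_mod, hf.map_mod_nat]

section TranslateConcat
variable {G : Type*} [Group G]

def translateConcat (g : G) (n : ℕ) (y : ℕ → G) (k : ℕ) : G := g ^ (k / n) * y (k % n)

variable {g : G} {n : ℕ} {y : ℕ → G}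

lemma translateConcat_of_lt {k : ℕ} (hk : k < n) : translateConcat g n y k = y k := by
  simp [translateConcat, Nat.div_eq_of_lt hk, Nat.mod_eq_of_lt hk]

lemma translateConcat_add_mul (hn : 0 < n) (k q : ℕ) :
    translateConcat g n y (k + q * n) = g ^ q * translateConcat g n y k := by
  rw [translateConcat, translateConcat, Nat.add_mul_div_right _ _ hn, Nat.add_mul_mod_self_right,
    add_comm, pow_add, mul_assoc]

lemma translateConcat_add (hn : 0 < n) (k : ℕ) :
    translateConcat g n y (k + n) = g * translateConcat g n y k := by
  simpa using translateConcat_add_mul (y := y) (g := g) hn k 1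

lemma translateConcat_periodic (hn : 0 < n) :
    Function.Periodic (translateConcat g n y) (orderOf g * n) := fun k => by
  rw [translateConcat_add_mul hn, pow_orderOf_eq_one, one_mul]

lemma inv_translateConcat_mul_succ (hn : 0 < n) (k : ℕ) :
    (translateConcat g n y k)⁻¹ * translateConcat g n y (k + 1) =
      (y (k % n))⁻¹ * translateConcat g n y (k % n + 1) := by
  have hk : k + 1 = k % n + 1 + k / n * n := by
    have := Nat.mod_add_div k n
    rw [mul_comm] at this
    omega
  rw [hk, translateConcat_add_mul hn, translateConcat, mul_inv_rev, mul_assoc, inv_mul_cancel_left]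

lemma translateConcat_injOn
    (hy : ∀ i < n, ∀ j < n, y i * (y j)⁻¹ ∈ Subgroup.zpowers g → i = j) :
    Set.InjOn (translateConcat g n y) (Set.Iio (orderOf g * n)) := by
  intro a ha b hb hab
  unfold translateConcat at hab
  have hn : 0 < n := Nat.pos_of_mul_pos_left (Nat.zero_lt_of_lt ha)
  have hcoset : y (a % n) * (y (b % n))⁻¹ = (g ^ (a / n))⁻¹ * g ^ (b / n) := by
    rw [eq_inv_mul_iff_mul_eq, ← mul_assoc, hab, mul_inv_cancel_right]
  have hr : a % n = b % n := hy _ (Nat.mod_lt _ hn) _ (Nat.mod_lt _ hn) <| hcoset ▸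
    mul_mem (inv_mem (Subgroup.npow_mem_zpowers _ _)) (Subgroup.npow_mem_zpowers _ _)
  have hq : a / n = b / n := by
    have hpow : g ^ (a / n) = g ^ (b / n) := by
      rwa [hr, mul_left_inj] at hab
    have ha' := Nat.div_lt_of_lt_mul (mul_comm (orderOf g) n ▸ ha)
    have hb' := Nat.div_lt_of_lt_mul (mul_comm (orderOf g) n ▸ hb)
    rwa [pow_inj_mod, Nat.mod_eq_of_lt ha', Nat.mod_eq_of_lt hb'] at hpow
  rw [← Nat.div_add_mod a n, ← Nat.div_add_mod b n, hq, hr]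

lemma exists_lt_translateConcat_eq [Finite G]
    (hy : ∀ c, ∃ r < n, y r * c⁻¹ ∈ Subgroup.zpowers g) (c : G) :
    ∃ k < orderOf g * n, translateConcat g n y k = c := by
  classical
  obtain ⟨r, hr, hrc⟩ := hy c
  obtain ⟨q, hq, hqc⟩ : ∃ q < orderOf g, g ^ q = c * (y r)⁻¹ := by
    simpa using mem_zpowers_iff_mem_range_orderOf.mp (inv_mem hrc)
  refine ⟨r + q * n, ?_, ?_⟩
  · calc r + q * n < (q + 1) * n := by linarith
      _ ≤ orderOf g * n := Nat.mul_le_mul_right n hq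
  · rw [translateConcat_add_mul (by omega), translateConcat_of_lt hr, hqc, inv_mul_cancel_right]

end TranslateConcat

section Cayley
variable {G : Type*} [Group G] {S : Set G} {hS : ∀ s ∈ S, s⁻¹ ∈ S} {h1 : (1 : G) ∉ S}

def cayleyMulLeft (g : G) : cayley S hS h1 ≃g cayley S hS h1 where
  toEquiv := Equiv.mulLeft g
  map_rel_iff' {a b} := by
    show (g * a)⁻¹ * (g * b) ∈ S ↔ a⁻¹ * b ∈ S
    rw [mul_inv_rev, mul_assoc, inv_mul_cancel_left]

theorem exists_isSymmHamCycle_cayley_translateConcat [Finite G] {g : G} {n : ℕ} {y : ℕ → G}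
    (hn : 0 < n) (hstep : ∀ r < n, (y r)⁻¹ * translateConcat g n y (r + 1) ∈ S)
    (hinj : ∀ i < n, ∀ j < n, y i * (y j)⁻¹ ∈ Subgroup.zpowers g → i = j)
    (hsurj : ∀ c, ∃ r < n, y r * c⁻¹ ∈ Subgroup.zpowers g) :
    ∃ x : ZMod (orderOf g * n) → G, IsSymmHamCycle (cayley S hS h1) x (orderOf g) := by
  have : NeZero (orderOf g * n) := ⟨(Nat.mul_pos (orderOf_pos g) hn).ne'⟩
  have hper := translateConcat_periodic (g := g) (y := y) hn
  refine ⟨fun i => translateConcat g n y i.val, ⟨⟨?inj, ?surj⟩, ?adj⟩, dvd_mul_right _ _,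
    cayleyMulLeft g, ?shift⟩
  case inj =>
    exact fun i j hij =>
      ZMod.val_injective _ (translateConcat_injOn hinj (ZMod.val_lt i) (ZMod.val_lt j) hij)
  case surj =>
    intro c
    obtain ⟨k, hk, rfl⟩ := exists_lt_translateConcat_eq hsurj c
    refine ⟨k, ?_⟩
    simp only [ZMod.val_natCast, Nat.mod_eq_of_lt hk]
  case adj =>
    intro i
    have hsucc := hper.map_zmod_val_add_natCast i 1
    rw [Nat.cast_one] at hsucc
    show (translateConcat g n y i.val)⁻¹ * translateConcat g n y (i + 1).val ∈ S
    rw [hsucc, inv_translateConcat_mul_succ hn]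
    exact hstep _ (Nat.mod_lt _ hn)
  case shift =>
    intro i
    rw [Nat.mul_div_cancel_left _ (orderOf_pos g)]
    exact (translateConcat_add hn _).symm.trans (hper.map_zmod_val_add_natCast i n).symm

lemma SimpleGraph.Walk.inv_getVert_mul_translateConcat_succ_mem {g s : G} (hs : s ∈ S)
    (P : (cayley S hS h1).Walk 1 (g * s)) {r : ℕ} (hr : r < P.length + 1) :
    (P.getVert r)⁻¹ * translateConcat g (P.length + 1) P.getVert (r + 1) ∈ S := by
  rcases (Nat.lt_succ_iff.mp hr).lt_or_eq with hr | rfl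
  · rw [translateConcat_of_lt (by omega)]
    exact P.adj_getVert_succ hr
  · have hlast := translateConcat_add (g := g) (y := P.getVert) P.length.succ_pos 0
    rw [zero_add] at hlast
    rw [hlast, translateConcat_of_lt P.length.succ_pos, P.getVert_zero, P.getVert_length, mul_one,
      mul_inv_rev, inv_mul_cancel_right]
    exact hS s hs

end Cayley

namespace SimpleGraph.Walk
variable {G : Type*} [Group G] {Γ : SimpleGraph G} {g u v : G} {P : Γ.Walk u v}

lemma IsPath.eq_of_getVert_mul_inv_mem_zpowers (hP : P.IsPath)
    (hcoset : ∀ c : G, ∃! y : G, y ∈ P.support ∧ y * c⁻¹ ∈ Subgroup.zpowers g)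
    {i j : ℕ} (hi : i ≤ P.length) (hj : j ≤ P.length)
    (hij : P.getVert i * (P.getVert j)⁻¹ ∈ Subgroup.zpowers g) : i = j := by
  have hmem {r : ℕ} (hr : r ≤ P.length) : P.getVert r ∈ P.support :=
    mem_support_iff_exists_getVert.mpr ⟨r, rfl, hr⟩
  have hself : P.getVert j * (P.getVert j)⁻¹ ∈ Subgroup.zpowers g := by
    rw [mul_inv_cancel]; exact one_mem _
  exact hP.getVert_injOn hi hj ((hcoset _).unique ⟨hmem hi, hij⟩ ⟨hmem hj, hself⟩)

lemma exists_getVert_mul_inv_mem_zpowers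
    (hcoset : ∀ c : G, ∃! y : G, y ∈ P.support ∧ y * c⁻¹ ∈ Subgroup.zpowers g) (c : G) :
    ∃ r ≤ P.length, P.getVert r * c⁻¹ ∈ Subgroup.zpowers g := by
  obtain ⟨w, ⟨hw, hwc⟩, -⟩ := hcoset c
  obtain ⟨r, rfl, hr⟩ := mem_support_iff_exists_getVert.mp hw
  exact ⟨r, hr, hwc⟩

end SimpleGraph.Walk

theorem stmt17_general {G : Type*} [Group G] [Fintype G] (S : Set G)
    (hS : ∀ s ∈ S, s⁻¹ ∈ S) (h1 : (1 : G) ∉ S)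
    (g s : G) (hs : s ∈ S)
    (P : (cayley S hS h1).Walk 1 (g * s)) (hP : P.IsPath)
    (hcoset : ∀ c : G, ∃! y : G, y ∈ P.support ∧ y * c⁻¹ ∈ Subgroup.zpowers g) :
    orderOf g ≤ hamCompression (cayley S hS h1) := by
  obtain ⟨x, hx⟩ := exists_isSymmHamCycle_cayley_translateConcat P.length.succ_pos
    (fun _ => P.inv_getVert_mul_translateConcat_succ_mem hs)
    (fun i hi j hj => hP.eq_of_getVert_mul_inv_mem_zpowers hcoset (by omega) (by omega))
    (fun c => (P.exists_getVert_mul_inv_mem_zpowers hcoset c).imp fun _ ⟨hr, h⟩ => ⟨by omega, h⟩)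
  exact hx.le_hamCompression

/-- Compression version of the factor group lemma: if there is a path in the Cayley graph
`Γ(G,S)` from the identity to `g * s` (where `s ∈ S`) meeting every right coset of `⟨g⟩`
exactly once, then `κ(Γ(G,S)) ≥ ord(g)`. -/
theorem stmt17 {G : Type*} [Group G] [Fintype G] (S : Set G)
    (hS : ∀ s ∈ S, s⁻¹ ∈ S) (h1 : (1 : G) ∉ S)
    (hgen : Subgroup.closure S = ⊤)
    (g s : G) (hs : s ∈ S)
    (P : (cayley S hS h1).Walk 1 (g * s)) (hP : P.IsPath)
    (hcoset : ∀ c : G, ∃! y : G, y ∈ P.support ∧ y * c⁻¹ ∈ Subgroup.zpowers g) :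
    orderOf g ≤ hamCompression (cayley S hS h1) :=
  stmt17_general S hS h1 g s hs P hP hcoset
end
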